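/- arXiv:1304.1036 — 5 statements merged into one kernel-verified Lean document; each statement's English description precedes it below -/
import Mathlib

section
/- Let G be a graph on n vertices with average degree d = 2e(G)/n, and let a, m, r, t be positive integers. If d^t / n^(t-1) - C(n, r) * (m/n)^t ≥ a, then G contains a subset U of at least a vertices such that every r vertices of U have at least m common neighbors. (Dependent Random Choice Lemma) -/
open Finset

private lemma drc_count_pi {V : Type*} [Fintype V] [DecidableEq V] (t : ℕ) (s : Finset V)
    (p : (Fin t → V) → Prop) [DecidablePred p] (hp : ∀ f, p f ↔ ∀ i, f i ∈ s) :
    (Finset.univ.filter p).card = s.card ^ t := by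
  have h : Finset.univ.filter p = Fintype.piFinset (fun _ : Fin t => s) := by
    ext f; simp [Fintype.mem_piFinset, hp]
  rw [h, Fintype.card_piFinset_const]

open Classical in
/-- Dependent Random Choice Lemma: if `G` is a graph on `n` vertices with average
degree `d = 2e(G)/n`, and `d^t / n^(t-1) - C(n,r) * (m/n)^t ≥ a`, then `G` contains
a set `U` of at least `a` vertices such that every `r` vertices of `U` have at
least `m` common neighbors. -/
theorem dependent_random_choice
    {V : Type*} [Fintype V] (G : SimpleGraph V) (n a m r t : ℕ)
    (hn : Fintype.card V = n) (hn1 : 1 ≤ n)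
    (ha : 1 ≤ a) (hm : 1 ≤ m) (hrpos : 1 ≤ r) (htpos : 1 ≤ t)
    (d : ℝ) (hd : d = 2 * (Nat.card G.edgeSet : ℝ) / n)
    (hineq : d ^ t / (n : ℝ) ^ (t - 1) - (n.choose r : ℝ) * ((m : ℝ) / n) ^ t ≥ a) :
    ∃ U : Finset V, a ≤ U.card ∧
      ∀ S : Finset V, S ⊆ U → S.card = r →
        m ≤ (Finset.univ.filter (fun v : V => ∀ u ∈ S, G.Adj u v)).card := by
  classical
  have hVne : Nonempty V := Fintype.card_pos_iff.mp (hn ▸ hn1)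
  -- common neighborhood
  set N : Finset V → Finset V :=
    fun S => Finset.univ.filter (fun v : V => ∀ u ∈ S, G.Adj u v) with hN
  set A : (Fin t → V) → Finset V :=
    fun f => Finset.univ.filter (fun v : V => ∀ i, G.Adj (f i) v) with hA
  set bad : Finset (Finset V) :=
    (Finset.univ : Finset (Finset V)).filter (fun S => S.card = r ∧ (N S).card < m)
    with hbad
  set Y : (Fin t → V) → ℕ := fun f => (bad.filter (fun S => S ⊆ A f)).card with hY
  set dg : V → ℕ := fun v => (Finset.univ.filter (fun u => G.Adj u v)).card with hdg
  -- count 1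
  have hsumA : ∑ f : Fin t → V, (A f).card = ∑ v : V, dg v ^ t := by
    have h1 : ∀ f : Fin t → V, (A f).card
        = ∑ v : V, if (∀ i, G.Adj (f i) v) then 1 else 0 := by
      intro f; rw [hA]; rw [Finset.card_filter]
    rw [Finset.sum_congr rfl (fun f _ => h1 f), Finset.sum_comm]
    refine Finset.sum_congr rfl (fun v _ => ?_)
    rw [← Finset.card_filter]
    exact drc_count_pi t (Finset.univ.filter (fun u => G.Adj u v)) _
      (fun f => by simp)
  -- count 2
  have hsumY : ∑ f : Fin t → V, Y f = ∑ S ∈ bad, (N S).card ^ t := by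
    have h1 : ∀ f : Fin t → V, Y f = ∑ S ∈ bad, if S ⊆ A f then 1 else 0 := by
      intro f; simp only [hY]; rw [Finset.card_filter]
    rw [Finset.sum_congr rfl (fun f _ => h1 f), Finset.sum_comm]
    refine Finset.sum_congr rfl (fun S _ => ?_)
    rw [← Finset.card_filter]
    refine drc_count_pi t (N S) _ (fun f => ?_)
    constructor
    · intro hsub i
      simp only [hN, Finset.mem_filter, Finset.mem_univ, true_and]
      intro u hu
      have := hsub hu
      simp only [hA, Finset.mem_filter, Finset.mem_univ, true_and] at this
      exact (this i).symm
    · intro h u hu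
      simp only [hA, Finset.mem_filter, Finset.mem_univ, true_and]
      intro i
      have := h i
      simp only [hN, Finset.mem_filter, Finset.mem_univ, true_and] at this
      exact (this u hu).symm
  -- bound on Y sum
  have hbadcard : bad.card ≤ n.choose r := by
    have : bad ⊆ Finset.powersetCard r Finset.univ := by
      intro S hS
      simp only [hbad, Finset.mem_filter] at hS
      simp [Finset.mem_powersetCard, hS.2.1]
    calc bad.card ≤ (Finset.powersetCard r (Finset.univ : Finset V)).card :=
          Finset.card_le_card this
      _ = n.choose r := by rw [Finset.card_powersetCard, Finset.card_univ, hn]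
  have hYbound : ∑ f : Fin t → V, Y f ≤ n.choose r * m ^ t := by
    rw [hsumY]
    calc ∑ S ∈ bad, (N S).card ^ t ≤ ∑ _S ∈ bad, m ^ t := by
          refine Finset.sum_le_sum (fun S hS => ?_)
          simp only [hbad, Finset.mem_filter] at hS
          exact Nat.pow_le_pow_left hS.2.2.le t
      _ = bad.card * m ^ t := by rw [Finset.sum_const, smul_eq_mul]
      _ ≤ n.choose r * m ^ t := Nat.mul_le_mul_right _ hbadcard
  -- degree sum
  have hdegsum : ∑ v : V, dg v = 2 * G.edgeFinset.card := by
    rw [← G.sum_degrees_eq_twice_card_edges]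
    refine Finset.sum_congr rfl (fun v _ => ?_)
    have hnb : (Finset.univ.filter (fun u => G.Adj u v)) = G.neighborFinset v := by
      ext u; simp [SimpleGraph.adj_comm]
    simp only [hdg]
    rw [hnb, SimpleGraph.card_neighborFinset_eq_degree]
  have hecard : (Nat.card G.edgeSet : ℝ) = (G.edgeFinset.card : ℝ) := by
    rw [Nat.card_eq_fintype_card, SimpleGraph.edgeFinset_card]
  obtain ⟨t', rfl⟩ : ∃ t', t = t' + 1 := ⟨t - 1, (Nat.succ_pred_eq_of_pos htpos).symm⟩
  have hn0 : (0:ℝ) < n := by exact_mod_cast hn1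
  -- power mean
  have hpm : ((2 * G.edgeFinset.card : ℕ) : ℝ) ^ (t' + 1) / (n:ℝ) ^ t'
      ≤ ∑ v : V, (dg v : ℝ) ^ (t' + 1) := by
    have := pow_sum_div_card_le_sum_pow (f := fun v : V => (dg v : ℝ))
      (s := Finset.univ) (fun i _ => by positivity) t'
    rw [Finset.card_univ, hn] at this
    calc ((2 * G.edgeFinset.card : ℕ) : ℝ) ^ (t' + 1) / (n:ℝ) ^ t'
        = (∑ v : V, (dg v : ℝ)) ^ (t' + 1) / (n:ℝ) ^ t' := by
          rw [← Nat.cast_sum, hdegsum]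
      _ ≤ ∑ v : V, (dg v : ℝ) ^ (t' + 1) := this
  -- main real inequality
  have hkey : (a : ℝ) * (n:ℝ) ^ (t' + 1)
      ≤ ∑ v : V, (dg v : ℝ) ^ (t' + 1) - (n.choose r : ℝ) * (m:ℝ) ^ (t' + 1) := by
    have h2 := hineq
    rw [hd, hecard] at h2
    simp only [Nat.add_sub_cancel, ge_iff_le] at h2
    rw [div_pow, div_pow, div_div] at h2
    have h4 := mul_le_mul_of_nonneg_right h2 (le_of_lt (pow_pos hn0 (t' + 1)))
    have h5 : ((2 * (G.edgeFinset.card : ℝ)) ^ (t' + 1) / ((n:ℝ) ^ (t' + 1) * (n:ℝ) ^ t')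
        - (n.choose r : ℝ) * ((m:ℝ) ^ (t' + 1) / (n:ℝ) ^ (t' + 1))) * (n:ℝ) ^ (t' + 1)
        = (2 * (G.edgeFinset.card : ℝ)) ^ (t' + 1) / (n:ℝ) ^ t'
          - (n.choose r : ℝ) * (m:ℝ) ^ (t' + 1) := by
      field_simp
    rw [h5] at h4
    have hpm' : (2 * (G.edgeFinset.card : ℝ)) ^ (t' + 1) / (n:ℝ) ^ t'
        ≤ ∑ v : V, (dg v : ℝ) ^ (t' + 1) := by
      push_cast at hpm ⊢
      exact hpm
    linarith
  -- existence of good f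
  have hgood : ∃ f : Fin (t' + 1) → V, a + Y f ≤ (A f).card := by
    by_contra hcon
    push_neg at hcon
    have hlt : ∀ f : Fin (t' + 1) → V, ((A f).card : ℝ) - (Y f : ℝ) < a := by
      intro f
      have := hcon f
      have : (A f).card < a + Y f := this
      have : ((A f).card : ℝ) < (a : ℝ) + (Y f : ℝ) := by exact_mod_cast this
      linarith
    have hcardfun : (Fintype.card (Fin (t' + 1) → V) : ℝ) = (n:ℝ) ^ (t' + 1) := by
      rw [Fintype.card_fun, hn, Fintype.card_fin]
      push_cast; ring
    have hsum : ∑ f : Fin (t' + 1) → V, (((A f).card : ℝ) - (Y f : ℝ))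
        < ∑ _f : Fin (t' + 1) → V, (a : ℝ) := by
      refine Finset.sum_lt_sum_of_nonempty ?_ (fun f _ => hlt f)
      exact Finset.univ_nonempty
    rw [Finset.sum_const, Finset.card_univ, Finset.sum_sub_distrib] at hsum
    have e1 : ∑ f : Fin (t' + 1) → V, ((A f).card : ℝ) = ∑ v : V, (dg v : ℝ) ^ (t' + 1) := by
      rw [← Nat.cast_sum, hsumA]; push_cast; rfl
    have e2 : ∑ f : Fin (t' + 1) → V, ((Y f) : ℝ) ≤ (n.choose r : ℝ) * (m:ℝ) ^ (t' + 1) := by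
      rw [← Nat.cast_sum]
      exact_mod_cast hYbound
    rw [e1] at hsum
    rw [nsmul_eq_mul, hcardfun] at hsum
    nlinarith [hkey, e2]
  obtain ⟨f, hf⟩ := hgood
  -- build U
  set c : Finset V → V := fun S => if h : S.Nonempty then h.choose else Classical.arbitrary V
    with hc
  have hcmem : ∀ S : Finset V, S.Nonempty → c S ∈ S := by
    intro S hS
    rw [hc]; simp only [dif_pos hS]; exact hS.choose_spec
  set R : Finset V := (bad.filter (fun S => S ⊆ A f)).image c with hR
  have hRcard : R.card ≤ Y f := Finset.card_image_le
  refine ⟨A f \ R, ?_, ?_⟩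
  · have h1 : a + R.card ≤ (A f).card := le_trans (by omega) hf
    have h2 := Finset.le_card_sdiff R (A f)
    omega
  · intro S hSU hScard
    by_contra hcon
    push_neg at hcon
    have hNS : (N S).card < m := hcon
    have hSA : S ⊆ A f := hSU.trans (Finset.sdiff_subset)
    have hSbad : S ∈ bad.filter (fun S => S ⊆ A f) := by
      simp only [hbad, Finset.mem_filter, Finset.mem_univ, true_and]
      exact ⟨⟨hScard, hNS⟩, hSA⟩
    have hcR : c S ∈ R := by
      rw [hR]; exact Finset.mem_image_of_mem c hSbad
    have hSne : S.Nonempty := Finset.card_pos.mp (by omega)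
    have : c S ∈ A f \ R := hSU (hcmem S hSne)
    exact (Finset.mem_sdiff.mp this).2 hcR
end

section
/- Let G be a graph on n vertices, let U be a set of vertices of G and let m be an integer. If G[U] contains a triangle, every 3 vertices of U have at least m common neighbors, and every set of m vertices of G contains an edge, then G contains a K_5. -/
open Classical in
/-- If `G[U]` contains a triangle, every 3 vertices of `U` have at least `m`
common neighbors, and every set of `m` vertices of `G` contains an edge, then `G`
contains a `K_5`. -/
theorem triangle_plus_common_nbhd_gives_K5
    {V : Type*} [Fintype V] (G : SimpleGraph V) (U : Finset V) (m : ℕ)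
    (htriangle : ∃ T : Finset V, T ⊆ U ∧ G.IsNClique 3 T)
    (hcommon : ∀ S : Finset V, S ⊆ U → S.card = 3 →
      m ≤ (Finset.univ.filter (fun v : V => ∀ u ∈ S, G.Adj u v)).card)
    (hedge : ∀ W : Finset V, W.card = m → ∃ u ∈ W, ∃ v ∈ W, G.Adj u v) :
    ¬ G.CliqueFree 5 := by
  obtain ⟨T, hTU, hT⟩ := htriangle
  set N := Finset.univ.filter (fun v : V => ∀ u ∈ T, G.Adj u v) with hN
  have hm : m ≤ N.card := hcommon T hTU hT.2
  obtain ⟨W, hWN, hWcard⟩ := Finset.exists_subset_card_eq hm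
  obtain ⟨u, hu, v, hv, huv⟩ := hedge W hWcard
  have hu' : ∀ x ∈ T, G.Adj x u := by
    have := hWN hu; simp only [hN, Finset.mem_filter] at this; exact this.2
  have hv' : ∀ x ∈ T, G.Adj x v := by
    have := hWN hv; simp only [hN, Finset.mem_filter] at this; exact this.2
  have huT : u ∉ T := fun h => (G.loopless.irrefl u (hu' u h)).elim
  have hvT : v ∉ T := fun h => (G.loopless.irrefl v (hv' v h)).elim
  intro hfree
  apply hfree (insert u (insert v T))
  constructor
  · intro x hx y hy hxy
    simp only [Finset.coe_insert, Set.mem_insert_iff, Finset.mem_coe] at hx hy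
    rcases hx with rfl | rfl | hx <;> rcases hy with rfl | rfl | hy
    · exact absurd rfl hxy
    · exact huv
    · exact (hu' y hy).symm
    · exact huv.symm
    · exact absurd rfl hxy
    · exact (hv' y hy).symm
    · exact hu' x hx
    · exact hv' x hx
    · exact hT.1 hx hy hxy
  · rw [Finset.card_insert_of_notMem, Finset.card_insert_of_notMem hvT, hT.2]
    simp only [Finset.mem_insert]
    rintro (rfl | h)
    · exact G.loopless.irrefl u huv
    · exact huT h
end

section
/- Let B be a K_4-free graph on h vertices and let T be a complete (r-2)-partite graph on n - h vertices (r ≥ 3) into each of whose classes a triangle-free graph has been placed. Let G be the join of B with T (every vertex of B adjacent to every vertex of T, keeping all internal edges). Then G is K_{2r}-free. -/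
/-- The join of two vertex-disjoint graphs: keep all internal edges and add all
edges between the two parts. -/
def graphJoin {α β : Type*} (B : SimpleGraph α) (T : SimpleGraph β) :
    SimpleGraph (α ⊕ β) where
  Adj x y := match x, y with
    | .inl a, .inl b => B.Adj a b
    | .inr a, .inr b => T.Adj a b
    | .inl _, .inr _ => True
    | .inr _, .inl _ => True
  symm := by
    refine ⟨?_⟩
    rintro (a | a) (b | b) h
    · exact B.symm.symm _ _ h
    · trivial
    · trivial
    · exact T.symm.symm _ _ h
  loopless := by
    refine ⟨?_⟩
    rintro (a | a) h
    · exact B.loopless.irrefl a h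
    · exact T.loopless.irrefl a h

/-!
A clique of the join splits into a clique of `B`, of size at most `3`, and a clique of `T`.
A clique of `T` meets each of the `r - 2` classes in a clique of the triangle-free graph placed
there, hence in at most `2` vertices. So every clique of the join has at most
`3 + 2 (r - 2) = 2r - 1` vertices.
-/

open Finset

namespace SimpleGraph

variable {α β ι : Type*}

theorem CliqueFreeOn.card_lt_of_isClique {G : SimpleGraph α} {s : Set α} {n : ℕ}
    (hG : G.CliqueFreeOn s n) {t : Finset α} (hts : ↑t ⊆ s) (ht : G.IsClique t) : #t < n := by
  by_contra! hn
  exact CliqueFreeOn.mono _ hn hG hts ⟨ht, rfl⟩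

theorem CliqueFree.card_lt_of_isClique {G : SimpleGraph α} {n : ℕ} (hG : G.CliqueFree n)
    {t : Finset α} (ht : G.IsClique t) : #t < n :=
  (hG.cliqueFreeOn (s := Set.univ)).card_lt_of_isClique (Set.subset_univ _) ht

theorem cliqueFree_of_cliqueFree_induce_fiber [Fintype ι] {G : SimpleGraph α} (f : α → ι)
    {k : ℕ} (h : ∀ i, (G.induce {v | f v = i}).CliqueFree (k + 1)) :
    G.CliqueFree (Fintype.card ι * k + 1) := by
  classical
  rintro s ⟨hs, hcard⟩
  have hfiber : ∀ i ∈ (univ : Finset ι), #{v ∈ s | f v = i} ≤ k := fun i _ =>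
    Nat.lt_succ_iff.mp <| ((cliqueFree_induce_iff _ _ _).mp (h i)).card_lt_of_isClique
      (fun v hv => (mem_filter.mp hv).2) (hs.subset (filter_subset _ s))
  have := card_le_mul_card_image_of_maps_to (fun v _ => mem_univ (f v)) k hfiber
  rw [card_univ, mul_comm] at this
  omega

variable {B : SimpleGraph α} {T : SimpleGraph β} {s : Finset (α ⊕ β)}

theorem isClique_toLeft_of_graphJoin (hs : (graphJoin B T).IsClique s) :
    B.IsClique s.toLeft := fun _ ha _ hb hab =>
  hs (mem_toLeft.mp ha) (mem_toLeft.mp hb) (Sum.inl_injective.ne hab)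

theorem isClique_toRight_of_graphJoin (hs : (graphJoin B T).IsClique s) :
    T.IsClique s.toRight := fun _ ha _ hb hab =>
  hs (mem_toRight.mp ha) (mem_toRight.mp hb) (Sum.inr_injective.ne hab)

theorem cliqueFree_graphJoin {a b : ℕ} (hB : B.CliqueFree (a + 1)) (hT : T.CliqueFree (b + 1)) :
    (graphJoin B T).CliqueFree (a + b + 1) := by
  rintro s ⟨hs, hcard⟩
  have := hB.card_lt_of_isClique (isClique_toLeft_of_graphJoin hs)
  have := hT.card_lt_of_isClique (isClique_toRight_of_graphJoin hs)
  have := s.card_toLeft_add_card_toRight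
  omega

end SimpleGraph

theorem join_K4free_with_multipartite_K2r_free_general
    {β : Type*} (r h : ℕ) (hr : 3 ≤ r)
    (B : SimpleGraph (Fin h)) (hB : B.CliqueFree 4)
    (T : SimpleGraph β) (f : β → Fin (r - 2))
    (hparts : ∀ i : Fin (r - 2), (T.induce {v : β | f v = i}).CliqueFree 3) :
    (graphJoin B T).CliqueFree (2 * r) := by
  have hT : T.CliqueFree ((r - 2) * 2 + 1) := by
    simpa using SimpleGraph.cliqueFree_of_cliqueFree_induce_fiber f hparts
  exact (SimpleGraph.cliqueFree_graphJoin (a := 3) hB hT).mono (by omega)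

/-- If `B` is a `K_4`-free graph on `h` vertices and `T` is a complete
`(r-2)`-partite graph (`r ≥ 3`) into each of whose classes a triangle-free graph
has been placed, then the join of `B` and `T` is `K_{2r}`-free. -/
theorem join_K4free_with_multipartite_K2r_free
    {β : Type*} [Fintype β] (r h : ℕ) (hr : 3 ≤ r)
    (B : SimpleGraph (Fin h)) (hB : B.CliqueFree 4)
    (T : SimpleGraph β) (f : β → Fin (r - 2))
    (hcross : ∀ u v : β, f u ≠ f v → T.Adj u v)
    (hparts : ∀ i : Fin (r - 2), (T.induce {v : β | f v = i}).CliqueFree 3) :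
    (graphJoin B T).CliqueFree (2 * r) :=
  join_K4free_with_multipartite_K2r_free_general r h hr B hB T f hparts
end

section
/- Let G be formed by taking the Turán graph T(n, r) (r | n) and placing a triangle-free graph H with α(H) = s into each class; then G is K_{2r+1}-free and α(G) = s. -/
/-- A set of vertices is independent. -/
def IsIndepSet' {V : Type*} (G : SimpleGraph V) (s : Set V) : Prop :=
  ∀ u ∈ s, ∀ v ∈ s, u ≠ v → ¬ G.Adj u v

/-- The independence number of a finite graph. -/
noncomputable def indepNum' {V : Type*} [Fintype V] (G : SimpleGraph V) : ℕ :=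
  sSup {k | ∃ s : Finset V, s.card = k ∧ IsIndepSet' G (s : Set V)}

/-- The graph obtained from the complete `r`-partite Turán graph with classes of
size `k` by placing a copy of `H` inside each class. -/
def turanPlus (r k : ℕ) (H : SimpleGraph (Fin k)) : SimpleGraph (Fin r × Fin k) where
  Adj p q := p.1 ≠ q.1 ∨ (p.1 = q.1 ∧ H.Adj p.2 q.2)
  symm := by
    constructor
    rintro p q (h | ⟨h, ha⟩)
    · exact Or.inl (Ne.symm h)
    · exact Or.inr ⟨h.symm, ha.symm⟩
  loopless := by
    constructor
    rintro p (h | ⟨_, ha⟩)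
    · exact h rfl
    · exact H.loopless.irrefl _ ha

/-- Let `G` be formed by taking the Turán graph `T(n, r)` (with `n = r * k`) and
placing a triangle-free graph `H` with `α(H) = s` into each class. Then `G` is
`K_{2r+1}`-free and `α(G) = s`. -/
theorem turan_plus_triangle_free (r k s : ℕ) (hr : 0 < r) (hk : 0 < k)
    (H : SimpleGraph (Fin k)) (hH : H.CliqueFree 3) (hα : indepNum' H = s) :
    (turanPlus r k H).CliqueFree (2 * r + 1) ∧ indepNum' (turanPlus r k H) = s := by
  constructor
  · intro t ht
    have hmaps : ∀ p ∈ t, p.1 ∈ (Finset.univ : Finset (Fin r)) := fun p _ => Finset.mem_univ _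
    have hcard : (Finset.univ : Finset (Fin r)).card * 2 < t.card := by
      rw [ht.card_eq]; simp [mul_comm]
    obtain ⟨i, -, hi⟩ := Finset.exists_lt_card_fiber_of_mul_lt_card_of_maps_to hmaps hcard
    rw [Finset.two_lt_card_iff] at hi
    obtain ⟨a, b, c, ha, hb, hc, hab, hac, hbc⟩ := hi
    simp only [Finset.mem_filter] at ha hb hc
    have hadj : ∀ x y : Fin r × Fin k, x ∈ t → y ∈ t → x ≠ y → x.1 = i → y.1 = i →
        H.Adj x.2 y.2 := by
      intro x y hx hy hxy hxi hyi
      rcases ht.1 hx hy hxy with h | ⟨_, h⟩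
      · exact absurd (hxi.trans hyi.symm) h
      · exact h
    exact hH {a.2, b.2, c.2} (SimpleGraph.is3Clique_triple_iff.mpr
      ⟨hadj a b ha.1 hb.1 hab ha.2 hb.2, hadj a c ha.1 hc.1 hac ha.2 hc.2,
       hadj b c hb.1 hc.1 hbc hb.2 hc.2⟩)
  · rw [← hα]
    unfold indepNum'
    congr 1
    ext m
    constructor
    · rintro ⟨t, hcard, hind⟩
      rcases t.eq_empty_or_nonempty with rfl | ⟨p, hp⟩
      · exact ⟨∅, by simpa using hcard, by simp [IsIndepSet']⟩
      · have hsame : ∀ x ∈ t, x.1 = p.1 := by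
          intro x hx
          by_contra hne
          have hxp : x ≠ p := fun h => hne (by rw [h])
          exact hind x hx p hp hxp (Or.inl hne)
        refine ⟨t.image Prod.snd, ?_, ?_⟩
        · rw [Finset.card_image_of_injOn, hcard]
          intro x hx y hy hxy
          exact Prod.ext ((hsame x hx).trans (hsame y hy).symm) hxy
        · intro u hu v hv huv hadj
          simp only [Finset.coe_image, Set.mem_image, Finset.mem_coe] at hu hv
          obtain ⟨x, hx, rfl⟩ := hu
          obtain ⟨y, hy, rfl⟩ := hv
          have hxy : x ≠ y := fun h => huv (by rw [h])
          exact hind x hx y hy hxy (Or.inr ⟨(hsame x hx).trans (hsame y hy).symm, hadj⟩)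
    · rintro ⟨t, hcard, hind⟩
      refine ⟨t.image (fun x => (⟨0, hr⟩, x)), ?_, ?_⟩
      · rw [Finset.card_image_of_injective _ (fun a b h => by simpa using h), hcard]
      · intro u hu v hv huv hadj
        simp only [Finset.coe_image, Set.mem_image, Finset.mem_coe] at hu hv
        obtain ⟨x, hx, rfl⟩ := hu
        obtain ⟨y, hy, rfl⟩ := hv
        rcases hadj with h | ⟨_, h⟩
        · exact h rfl
        · exact hind x hx y hy (fun he => huv (by rw [he])) h
end

section
/- Every graph G on k vertices with more than (1 - 1/(q-1)) k²/2 edges contains a clique K_q (Turán's theorem, the form used for cluster graphs). -/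
/-!
A `K_{r+1}`-free graph has at most as many edges as a Turán-maximal graph, which by Turán's
theorem is the Turán graph `T(n, r)`; counting its edges gives `2r·e ≤ (r - 1)·n²`, i.e.
`e ≤ (1 - 1/r)·n²/2`. With `r = q - 1` this contradicts the hypothesis on the edge count.
-/

open Finset

namespace SimpleGraph

variable {V : Type*} [Fintype V] {G : SimpleGraph V} [DecidableRel G.Adj] {r : ℕ}

theorem CliqueFree.two_mul_mul_card_edgeFinset_le (hr : 0 < r) (hG : G.CliqueFree (r + 1)) :
    2 * r * #G.edgeFinset ≤ (r - 1) * Fintype.card V ^ 2 := by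
  obtain ⟨H, _, hH⟩ := exists_isTuranMaximal (V := V) hr
  have hGH : #G.edgeFinset ≤ #(turanGraph (Fintype.card V) r).edgeFinset :=
    (hH.2 hG).trans_eq hH.nonempty_iso_turanGraph.some.card_edgeFinset_eq
  calc 2 * r * #G.edgeFinset
      ≤ 2 * r * #(turanGraph (Fintype.card V) r).edgeFinset := by gcongr
    _ ≤ (r - 1) * Fintype.card V ^ 2 := mul_card_edgeFinset_turanGraph_le

end SimpleGraph

/-- Turán's theorem in the form used for cluster graphs: every graph on `k`
vertices with more than `(1 - 1/(q-1)) k²/2` edges contains a clique `K_q`. -/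
theorem turan_cluster {V : Type*} [Fintype V] (G : SimpleGraph V) (k q : ℕ)
    (hk : Fintype.card V = k) (hq : 2 ≤ q)
    (he : ((1 : ℝ) - 1 / ((q : ℝ) - 1)) * (k : ℝ) ^ 2 / 2 <
      (Nat.card G.edgeSet : ℝ)) :
    ¬ G.CliqueFree q := by
  classical
  intro hG
  obtain ⟨r, rfl⟩ : ∃ r, q = r + 1 := ⟨q - 1, by omega⟩
  have hr : 0 < r := by omega
  have hbound : 2 * (r : ℝ) * #G.edgeFinset ≤ ((r : ℝ) - 1) * (k : ℝ) ^ 2 := by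
    have := Nat.cast_le (α := ℝ) |>.mpr (hk ▸ hG.two_mul_mul_card_edgeFinset_le hr)
    push_cast [Nat.cast_sub hr] at this
    exact this
  rw [Nat.card_eq_fintype_card, ← SimpleGraph.edgeFinset_card] at he
  push_cast at he
  have hr' : (1 : ℝ) ≤ r := by exact_mod_cast hr
  rw [add_sub_cancel_right, one_sub_div (by positivity), div_mul_eq_mul_div, div_div,
    div_lt_iff₀ (by positivity)] at he
  linarith
end
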